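/- arXiv:1407.3254 — 3 statements merged into one kernel-verified Lean document; each statement's English description precedes it below -/
import Mathlib

section
/- Let n ≥ 2 and let a_1, …, a_n be real numbers. The diagonal partial n×n matrix diag(a_1, …, a_n) is completable to a rank-one matrix in the standard simplex Δ^{nn−1} if and only if a_i ≥ 0 for all i = 1, …, n and ∑_{i=1}^n √(a_i) ≤ 1. -/
/-!
A rank-one matrix has vanishing `2 × 2` minors, so `√(M i i) * √(M j j) = √(M i j * M j i)`,
which is at most `(M i j + M j i) / 2` by AM-GM; summing over `i, j` gives `(∑ √aᵢ)² ≤ ∑ M = 1`.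

Conversely, with `bᵢ = √aᵢ` we take `M = x yᵀ`, where `x` and `y` agree with `b` except at one
index `p`: there `x_p y_p = b_p²`, and `x_p + y_p` is chosen so that `(∑ x)(∑ y) = 1`, which is
possible as soon as `b` is nonzero somewhere off `p`. If `b = 0` then `M = e_p e_qᵀ` with `p ≠ q`.
-/

open Matrix Finset

namespace Matrix

variable {R : Type*} [CommRing R] [IsDomain R] {ι κ : Type*} [Fintype κ]

theorem one_le_rank_of_ne_zero {M : Matrix ι κ R} (hM : M ≠ 0) : 1 ≤ M.rank := by
  obtain ⟨i, j, hij⟩ : ∃ i j, M i j ≠ 0 := by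
    by_contra! h
    exact hM (Matrix.ext h)
  have hdet : (M.submatrix ![i] ![j]).det ≠ 0 := by
    rwa [det_unique]
  have := rank_submatrix_le M ![i] ![j]
  rwa [rank_of_det_ne_zero hdet, Fintype.card_fin] at this

theorem mul_eq_mul_of_rank_le_one {M : Matrix ι κ R} (hM : M.rank ≤ 1) (i j : ι) (k l : κ) :
    M i k * M j l = M i l * M j k := by
  by_contra hne
  have hdet : (M.submatrix ![i, j] ![k, l]).det ≠ 0 := by
    rw [det_fin_two]
    simpa [sub_eq_zero] using hne
  have := rank_submatrix_le M ![i, j] ![k, l]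
  rw [rank_of_det_ne_zero hdet, Fintype.card_fin] at this
  omega

theorem rank_vecMulVec_eq_one {x : ι → R} {y : κ → R} (h : vecMulVec x y ≠ 0) :
    (vecMulVec x y).rank = 1 :=
  le_antisymm (rank_vecMulVec_le x y) (one_le_rank_of_ne_zero h)

end Matrix

theorem sq_sum_sqrt_diag_le_sum {ι : Type*} [Fintype ι] (M : Matrix ι ι ℝ)
    (hM : ∀ i j, 0 ≤ M i j) (hminor : ∀ i j, M i i * M j j = M i j * M j i) :
    (∑ i, √(M i i)) ^ 2 ≤ ∑ i, ∑ j, M i j := by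
  have amgm (i j : ι) : √(M i i) * √(M j j) ≤ (M i j + M j i) / 2 := by
    rw [← Real.sqrt_mul (hM i i), hminor, Real.sqrt_mul (hM i j)]
    nlinarith [sq_nonneg (√(M i j) - √(M j i)), Real.sq_sqrt (hM i j), Real.sq_sqrt (hM j i)]
  calc (∑ i, √(M i i)) ^ 2 = ∑ i, ∑ j, √(M i i) * √(M j j) := by rw [sq, sum_mul_sum]
    _ ≤ ∑ i, ∑ j, (M i j + M j i) / 2 := by gcongr with i _ j _; exact amgm i j
    _ = ∑ i, ∑ j, M i j := by
      simp only [← sum_div, sum_add_distrib]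
      rw [sum_comm (f := fun i j => M j i)]
      ring

theorem exists_nonneg_add_eq_mul_eq_sq {b K : ℝ} (hb : 0 ≤ b) (hK : 2 * b ≤ K) :
    ∃ X Y : ℝ, 0 ≤ X ∧ 0 ≤ Y ∧ X + Y = K ∧ X * Y = b ^ 2 := by
  have hdisc : 0 ≤ K ^ 2 - 4 * b ^ 2 := by nlinarith
  have hD := Real.sq_sqrt hdisc
  have hDK : √(K ^ 2 - 4 * b ^ 2) ≤ K := by nlinarith [Real.sqrt_nonneg (K ^ 2 - 4 * b ^ 2)]
  refine ⟨(K + √(K ^ 2 - 4 * b ^ 2)) / 2, (K - √(K ^ 2 - 4 * b ^ 2)) / 2, ?_, ?_, ?_, ?_⟩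
  · linarith [Real.sqrt_nonneg (K ^ 2 - 4 * b ^ 2)]
  · linarith
  · ring
  · linear_combination (-1 / 4 : ℝ) * hD

section Construction

variable {ι : Type*} [Fintype ι] [DecidableEq ι]

theorem exists_update_mul_eq_sq_sum_mul_sum_eq_one {b : ι → ℝ} (hb : ∀ i, 0 ≤ b i)
    (hs : ∑ i, b i ≤ 1) (p : ι) (hr : 0 < ∑ i ∈ univ \ {p}, b i) :
    ∃ x y : ι → ℝ, (∀ i, 0 ≤ x i) ∧ (∀ i, 0 ≤ y i) ∧ (∀ i, x i * y i = b i ^ 2) ∧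
      (∑ i, x i) * (∑ i, y i) = 1 := by
  set r := ∑ i ∈ univ \ {p}, b i
  have hsplit : ∑ i, b i = b p + r := by
    rw [← sum_update_of_mem (mem_univ p), Function.update_eq_self]
  have hK : 2 * b p ≤ (1 - r ^ 2 - b p ^ 2) / r := by
    rw [le_div_iff₀ hr]
    nlinarith [hb p, hsplit, hs]
  obtain ⟨X, Y, hX, hY, hsumXY, hprodXY⟩ := exists_nonneg_add_eq_mul_eq_sq (hb p) hK
  refine ⟨Function.update b p X, Function.update b p Y, ?_, ?_, ?_, ?_⟩
  · intro i
    rcases eq_or_ne i p with rfl | hi <;> simp [*]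
  · intro i
    rcases eq_or_ne i p with rfl | hi <;> simp [*]
  · intro i
    rcases eq_or_ne i p with rfl | hi <;> simp [*, sq]
  · rw [sum_update_of_mem (mem_univ p), sum_update_of_mem (mem_univ p)]
    field_simp at hsumXY
    linear_combination hsumXY + hprodXY

theorem exists_nonneg_mul_eq_sq_sum_mul_sum_eq_one [Nontrivial ι] {b : ι → ℝ}
    (hb : ∀ i, 0 ≤ b i) (hs : ∑ i, b i ≤ 1) :
    ∃ x y : ι → ℝ, (∀ i, 0 ≤ x i) ∧ (∀ i, 0 ≤ y i) ∧ (∀ i, x i * y i = b i ^ 2) ∧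
      (∑ i, x i) * (∑ i, y i) = 1 := by
  by_cases hzero : ∀ i, b i = 0
  · obtain ⟨p, q, hpq⟩ := exists_pair_ne ι
    refine ⟨Pi.single p 1, Pi.single q 1, ?_, ?_, fun i => ?_, by simp⟩
    · intro i; rcases eq_or_ne i p with rfl | hi <;> simp [*]
    · intro i; rcases eq_or_ne i q with rfl | hi <;> simp [*]
    · rcases eq_or_ne i p with rfl | hi <;> simp [*]
  · obtain ⟨q, hq⟩ := not_forall.1 hzero
    obtain ⟨p, hpq⟩ := exists_ne q
    refine exists_update_mul_eq_sq_sum_mul_sum_eq_one hb hs p ?_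
    exact ((hb q).lt_of_ne (Ne.symm hq)).trans_le
      (single_le_sum (fun i _ => hb i) (by simpa using hpq.symm))

end Construction

/-- A diagonal partial `n × n` matrix `diag(a₁,…,aₙ)` is completable to a rank-one
matrix in the standard simplex iff all `aᵢ ≥ 0` and `∑ √(aᵢ) ≤ 1`. -/
theorem diagonal_completable_iff_nonneg (n : ℕ) (hn : 2 ≤ n) (a : Fin n → ℝ) :
    (∃ M : Matrix (Fin n) (Fin n) ℝ,
      (∀ i j, 0 ≤ M i j) ∧ (∑ i, ∑ j, M i j = 1) ∧ M.rank = 1 ∧ ∀ i, M i i = a i) ↔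
    ((∀ i, 0 ≤ a i) ∧ ∑ i, Real.sqrt (a i) ≤ 1) := by
  constructor
  · rintro ⟨M, hM, hsum, hrank, hdiag⟩
    obtain rfl : (fun i => M i i) = a := funext hdiag
    have hsq := sq_sum_sqrt_diag_le_sum M hM fun i j =>
      mul_eq_mul_of_rank_le_one hrank.le i j i j
    refine ⟨fun i => hM i i, ?_⟩
    rw [hsum] at hsq
    exact (sq_le_one_iff₀ (sum_nonneg fun i _ => Real.sqrt_nonneg _)).1 hsq
  · rintro ⟨ha, hs⟩
    have : Nontrivial (Fin n) := Fin.nontrivial_iff_two_le.2 hn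
    obtain ⟨x, y, hx, hy, hxy, hprod⟩ :=
      exists_nonneg_mul_eq_sq_sum_mul_sum_eq_one (fun i => Real.sqrt_nonneg (a i)) hs
    have hsum : ∑ i, ∑ j, vecMulVec x y i j = 1 := by
      simpa only [vecMulVec_apply, sum_mul_sum] using hprod
    refine ⟨vecMulVec x y, fun i j => mul_nonneg (hx i) (hy j), hsum,
      rank_vecMulVec_eq_one ?_, fun i => by rw [vecMulVec_apply, hxy, Real.sq_sqrt (ha i)]⟩
    intro h
    simp [h] at hsum
end

section
/- Let n ≥ 2 and let a_1, …, a_n be positive real numbers with ∑_{i=1}^n √(a_i) = 1. Then there is exactly one rank-one matrix M in the standard simplex Δ^{nn−1} with m_{ii} = a_i for all i, namely the matrix with entries m_{ij} = √(a_i)·√(a_j). -/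
/-!
A matrix of rank at most one with entries summing to `1` is the outer product `r cᵀ` of its
row sums `r` and column sums `c`, two probability vectors. The diagonal condition reads
`rᵢ cᵢ = aᵢ`, so `∑ √(rᵢ cᵢ) = 1`; since `∑ (√rᵢ - √cᵢ)² = 2 - 2 ∑ √(rᵢ cᵢ)`, this forces
`r = c`, whence `rᵢ = cᵢ = √aᵢ`.
-/

open Finset

namespace Matrix

section Field

variable {K m n : Type*} [Field K] [Fintype n]

theorem eq_zero_of_rank_eq_zero {M : Matrix m n K} (h : M.rank = 0) : M = 0 := by
  classical
  rwa [Matrix.rank, Submodule.finrank_eq_zero, LinearMap.range_eq_bot, ← toLin'_apply',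
    LinearEquiv.map_eq_zero_iff] at h

theorem rank_vecMulVec_eq_one_s7 {w : m → K} {v : n → K} (hw : w ≠ 0) (hv : v ≠ 0) :
    (vecMulVec w v).rank = 1 := by
  refine le_antisymm (rank_vecMulVec_le w v) (Nat.one_le_iff_ne_zero.mpr fun h => ?_)
  obtain ⟨i, hi⟩ := Function.ne_iff.mp hw
  obtain ⟨j, hj⟩ := Function.ne_iff.mp hv
  exact mul_ne_zero hi hj congr($(eq_zero_of_rank_eq_zero h) i j)

theorem exists_eq_vecMulVec_of_rank_le_one {M : Matrix m n K} (h : M.rank ≤ 1) :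
    ∃ (w : m → K) (v : n → K), M = vecMulVec w v := by
  classical
  obtain ⟨w, hw⟩ := finrank_le_one_iff.mp h
  have hcol : ∀ j, ∃ c : K, c • (w : m → K) = M.col j := fun j => by
    obtain ⟨c, hc⟩ := hw ⟨M.col j, Pi.single j 1, by simp [mulVec_single]⟩
    exact ⟨c, congrArg Subtype.val hc⟩
  choose v hv using hcol
  refine ⟨w, v, ext fun i j => ?_⟩
  rw [vecMulVec_apply, mul_comm, ← col_apply M j i, ← hv j, Pi.smul_apply, smul_eq_mul]

end Field

theorem vecMulVec_eq_vecMulVec_sum {R m n : Type*} [CommSemiring R] [Fintype m] [Fintype n]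
    {w : m → R} {v : n → R} (h : ∑ i, ∑ j, vecMulVec w v i j = 1) :
    vecMulVec w v =
      vecMulVec (fun i => ∑ j, vecMulVec w v i j) (fun j => ∑ i, vecMulVec w v i j) := by
  simp only [vecMulVec_apply, ← sum_mul_sum] at h ⊢
  ext i j
  simp only [vecMulVec_apply, ← mul_sum, ← sum_mul]
  calc w i * v j = w i * v j * ((∑ k, w k) * ∑ l, v l) := by rw [h, mul_one]
    _ = _ := by ring

theorem eq_vecMulVec_sum_of_rank_le_one {K m n : Type*} [Field K] [Fintype m] [Fintype n]
    {M : Matrix m n K} (hrank : M.rank ≤ 1) (hsum : ∑ i, ∑ j, M i j = 1) :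
    M = vecMulVec (fun i => ∑ j, M i j) (fun j => ∑ i, M i j) := by
  obtain ⟨w, v, rfl⟩ := exists_eq_vecMulVec_of_rank_le_one hrank
  exact vecMulVec_eq_vecMulVec_sum hsum

end Matrix

open Matrix

theorem Real.eq_of_sum_sqrt_mul_eq_one {ι : Type*} {s : Finset ι} {p q : ι → ℝ}
    (hp : ∀ i ∈ s, 0 ≤ p i) (hq : ∀ i ∈ s, 0 ≤ q i) (hp1 : ∑ i ∈ s, p i = 1)
    (hq1 : ∑ i ∈ s, q i = 1) (h : ∑ i ∈ s, √(p i * q i) = 1) : ∀ i ∈ s, p i = q i := by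
  have hsq : ∀ i ∈ s, (√(p i) - √(q i)) ^ 2 = p i + q i - 2 * √(p i * q i) := fun i hi => by
    rw [sub_sq, sq_sqrt (hp i hi), sq_sqrt (hq i hi), sqrt_mul (hp i hi)]
    ring
  have hzero : ∑ i ∈ s, (√(p i) - √(q i)) ^ 2 = 0 := by
    rw [sum_congr rfl hsq, sum_sub_distrib, sum_add_distrib, ← mul_sum, hp1, hq1, h]
    norm_num
  intro i hi
  have hi0 := (sum_eq_zero_iff_of_nonneg fun i _ => sq_nonneg _).mp hzero i hi
  rw [← sqrt_inj (hp i hi) (hq i hi), ← sub_eq_zero, ← sq_eq_zero_iff, hi0]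

theorem unique_completion_of_sum_sqrt_eq_one_general (n : ℕ) (a : Fin n → ℝ)
    (ha : ∀ i, 0 < a i) (hsum : ∑ i, Real.sqrt (a i) = 1) :
    ∀ M : Matrix (Fin n) (Fin n) ℝ,
      ((∀ i j, 0 ≤ M i j) ∧ (∑ i, ∑ j, M i j = 1) ∧ M.rank = 1 ∧ ∀ i, M i i = a i) ↔
      M = Matrix.of fun i j => Real.sqrt (a i) * Real.sqrt (a j) := by
  intro M
  constructor
  · rintro ⟨hnonneg, hM1, hrank, hdiag⟩
    set r : Fin n → ℝ := fun i => ∑ j, M i j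
    set c : Fin n → ℝ := fun j => ∑ i, M i j
    have hM : M = vecMulVec r c := eq_vecMulVec_sum_of_rank_le_one hrank.le hM1
    have hr : ∀ i ∈ univ, 0 ≤ r i := fun i _ => sum_nonneg fun j _ => hnonneg i j
    have hc : ∀ j ∈ univ, 0 ≤ c j := fun j _ => sum_nonneg fun i _ => hnonneg i j
    have hrc : ∀ i, r i * c i = a i := fun i => by rw [← vecMulVec_apply, ← hM, hdiag]
    have hr_eq_c := Real.eq_of_sum_sqrt_mul_eq_one hr hc hM1 (by rw [← hM1, sum_comm])
      (by simpa only [hrc] using hsum)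
    have hr_sqrt : ∀ i, r i = √(a i) := fun i => by
      rw [← hrc, ← hr_eq_c i (mem_univ i), Real.sqrt_mul_self (hr i (mem_univ i))]
    rw [hM]
    ext i j
    rw [vecMulVec_apply, ← hr_eq_c j (mem_univ j), hr_sqrt, hr_sqrt, of_apply]
  · rintro rfl
    have hsqrt_ne : (fun i => √(a i)) ≠ 0 := fun h => by simp [h] at hsum
    refine ⟨fun i j => mul_nonneg (Real.sqrt_nonneg _) (Real.sqrt_nonneg _), ?_,
      rank_vecMulVec_eq_one_s7 hsqrt_ne hsqrt_ne, fun i => Real.mul_self_sqrt (ha i).le⟩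
    simp only [of_apply, ← sum_mul_sum, hsum, mul_one]

/-- If `∑ √aᵢ = 1` with all `aᵢ > 0`, the unique rank-one matrix in the standard
simplex with diagonal `a` is the matrix `(√aᵢ · √aⱼ)`. -/
theorem unique_completion_of_sum_sqrt_eq_one (n : ℕ) (hn : 2 ≤ n) (a : Fin n → ℝ)
    (ha : ∀ i, 0 < a i) (hsum : ∑ i, Real.sqrt (a i) = 1) :
    ∀ M : Matrix (Fin n) (Fin n) ℝ,
      ((∀ i j, 0 ≤ M i j) ∧ (∑ i, ∑ j, M i j = 1) ∧ M.rank = 1 ∧ ∀ i, M i i = a i) ↔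
      M = Matrix.of fun i j => Real.sqrt (a i) * Real.sqrt (a j) :=
  unique_completion_of_sum_sqrt_eq_one_general n a ha hsum
end

section
/- Let S ⊆ [m]×[n] be a pattern and let M be a partial matrix subordinate to S with all specified entries nonnegative, and let Z = {(i,j) ∈ S : m_{ij} = 0}. Then M is completable to a rank-one matrix in the standard simplex Δ^{mn−1} if and only if there exist proper subsets I ⊊ [m] and J ⊊ [n] such that (1) every position in Z lies in a row of I or a column of J, (2) no position of S∖Z lies in a row of I or a column of J, and (3) the partial matrix obtained by restricting M to the positions of S contained in ([m]∖I)×([n]∖J) is completable to a rank-one matrix in the standard simplex Δ^{(m−|I|)(n−|J|)−1}. -/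
/-!
A matrix of rank one with entry sum `1` is the outer product of its row sums and its column
sums, so a rank-one matrix in the simplex is exactly `u vᵀ` with `u`, `v` probability vectors.
The zero entries of `u vᵀ` fill the rows where `u` vanishes and the columns where `v` vanishes.
Taking `I`, `J` to be these zero sets and restricting `u`, `v` to their complements gives one
direction; extending probability vectors on `Iᶜ`, `Jᶜ` by zero gives the other.
-/

open Matrix Finset

namespace Matrix

variable {p q K : Type*} [Fintype p] [Fintype q] [Field K]

theorem rank_eq_zero_iff (A : Matrix p q K) : A.rank = 0 ↔ A = 0 := by
  rw [rank_eq_finrank_span_row, Submodule.finrank_eq_zero, Submodule.span_eq_bot]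
  simp only [Set.forall_mem_range]
  exact funext_iff.symm

theorem rank_vecMulVec_eq_one_s15 {u : p → K} {v : q → K} (hu : u ≠ 0) (hv : v ≠ 0) :
    (vecMulVec u v).rank = 1 := by
  refine le_antisymm (rank_vecMulVec_le u v) (Nat.one_le_iff_ne_zero.mpr ?_)
  rw [Ne, rank_eq_zero_iff]
  obtain ⟨i, hi⟩ := Function.ne_iff.mp hu
  obtain ⟨j, hj⟩ := Function.ne_iff.mp hv
  exact fun h => mul_ne_zero hi hj (by simpa [vecMulVec_apply] using congrFun (congrFun h i) j)

theorem exists_eq_vecMulVec_of_rank_eq_one {A : Matrix p q K} (hA : A.rank = 1) :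
    ∃ u v, A = vecMulVec u v := by
  rw [rank_eq_finrank_span_row] at hA
  obtain ⟨v, -, hv⟩ := finrank_eq_one_iff'.mp hA
  choose u hu using fun i => hv ⟨A i, Submodule.subset_span (Set.mem_range_self i)⟩
  refine ⟨u, v, Matrix.ext fun i j => ?_⟩
  simpa [vecMulVec_apply] using (congrFun (congrArg Subtype.val (hu i)) j).symm

theorem eq_vecMulVec_sum_of_rank_eq_one {A : Matrix p q K} (hsum : ∑ i, ∑ j, A i j = 1)
    (hA : A.rank = 1) : A = vecMulVec (fun i => ∑ j, A i j) (fun j => ∑ i, A i j) := by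
  obtain ⟨u, v, rfl⟩ := exists_eq_vecMulVec_of_rank_eq_one hA
  simp only [vecMulVec_apply, ← sum_mul_sum] at hsum ⊢
  ext i j
  simp only [vecMulVec_apply, ← mul_sum, ← sum_mul]
  linear_combination (-(u i * v j)) * hsum

variable [LinearOrder K] [IsStrictOrderedRing K]

theorem nonneg_sum_eq_one_rank_eq_one_iff (A : Matrix p q K) :
    ((∀ i j, 0 ≤ A i j) ∧ ∑ i, ∑ j, A i j = 1 ∧ A.rank = 1) ↔
      ∃ u ∈ stdSimplex K p, ∃ v ∈ stdSimplex K q, A = vecMulVec u v := by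
  constructor
  · rintro ⟨hA0, hsum, hA⟩
    refine ⟨_, ⟨fun i => sum_nonneg fun j _ => hA0 i j, hsum⟩,
      _, ⟨fun j => sum_nonneg fun i _ => hA0 i j, by rw [sum_comm]; exact hsum⟩,
      eq_vecMulVec_sum_of_rank_eq_one hsum hA⟩
  · rintro ⟨u, hu, v, hv, rfl⟩
    refine ⟨fun i j => mul_nonneg (hu.1 i) (hv.1 j), ?_, rank_vecMulVec_eq_one_s15 ?_ ?_⟩
    · simp only [vecMulVec_apply, ← sum_mul_sum, hu.2, hv.2, one_mul]
    · rintro rfl; simpa using hu.2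
    · rintro rfl; simpa using hv.2

theorem exists_nonneg_sum_eq_one_rank_eq_one_iff (P : Matrix p q K → Prop) :
    (∃ M : Matrix p q K,
        (∀ i j, 0 ≤ M i j) ∧ ∑ i, ∑ j, M i j = 1 ∧ M.rank = 1 ∧ P M) ↔
      ∃ u ∈ stdSimplex K p, ∃ v ∈ stdSimplex K q, P (vecMulVec u v) := by
  constructor
  · rintro ⟨M, hM0, hsum, hM, hP⟩
    obtain ⟨u, hu, v, hv, rfl⟩ := (nonneg_sum_eq_one_rank_eq_one_iff M).mp ⟨hM0, hsum, hM⟩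
    exact ⟨u, hu, v, hv, hP⟩
  · rintro ⟨u, hu, v, hv, hP⟩
    obtain ⟨hM0, hsum, hM⟩ := (nonneg_sum_eq_one_rank_eq_one_iff _).mpr ⟨u, hu, v, hv, rfl⟩
    exact ⟨_, hM0, hsum, hM, hP⟩

end Matrix

section stdSimplex

variable {𝕜 ι : Type*} [Semiring 𝕜] [PartialOrder 𝕜] [Fintype ι] {u : ι → 𝕜}

theorem filter_eq_zero_ne_univ_of_mem_stdSimplex [Nontrivial 𝕜] [DecidablePred (u · = 0)]
    (hu : u ∈ stdSimplex 𝕜 ι) : univ.filter (u · = 0) ≠ univ := by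
  intro h
  have : ∀ i, u i = 0 := by simpa [eq_univ_iff_forall] using h
  simpa [this] using hu.2

theorem restrict_mem_stdSimplex (hu : u ∈ stdSimplex 𝕜 ι) {s : Finset ι}
    (hs : ∀ i ∉ s, u i = 0) : (fun i : s => u i) ∈ stdSimplex 𝕜 s :=
  ⟨fun i => hu.1 i, by rw [sum_coe_sort s u, sum_subset (subset_univ s) fun i _ => hs i, hu.2]⟩

theorem extend_mem_stdSimplex {s : Finset ι} {u : s → 𝕜} (hu : u ∈ stdSimplex 𝕜 s) :
    Subtype.val.extend u 0 ∈ stdSimplex 𝕜 ι := by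
  refine ⟨fun i => ?_, ?_⟩
  · by_cases hi : i ∈ s
    · rw [Function.extend_val_apply hi]; exact hu.1 _
    · rw [Function.extend_val_apply' hi]; rfl
  · have hext : ∀ i ∉ s, Subtype.val.extend u 0 i = 0 := fun i hi =>
      Function.extend_val_apply' (p := (· ∈ s)) hi
    rw [← sum_subset (subset_univ s) fun i _ => hext i, ← sum_eq_sum_extend, hu.2]

end stdSimplex

theorem completable_with_zeros_iff_general (m n : ℕ) (S : Set (Fin m × Fin n))
    (f : Fin m → Fin n → ℝ) :
    (∃ M : Matrix (Fin m) (Fin n) ℝ,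
      (∀ i j, 0 ≤ M i j) ∧ (∑ i, ∑ j, M i j = 1) ∧ M.rank = 1 ∧
      ∀ p ∈ S, M p.1 p.2 = f p.1 p.2) ↔
    (∃ I : Finset (Fin m), ∃ J : Finset (Fin n),
      I ≠ Finset.univ ∧ J ≠ Finset.univ ∧
      (∀ p ∈ S, f p.1 p.2 = 0 → p.1 ∈ I ∨ p.2 ∈ J) ∧
      (∀ p ∈ S, f p.1 p.2 ≠ 0 → p.1 ∉ I ∧ p.2 ∉ J) ∧
      (∃ N : Matrix ↥(Iᶜ : Finset (Fin m)) ↥(Jᶜ : Finset (Fin n)) ℝ,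
        (∀ i j, 0 ≤ N i j) ∧ (∑ i, ∑ j, N i j = 1) ∧ N.rank = 1 ∧
        ∀ (i : ↥(Iᶜ : Finset (Fin m))) (j : ↥(Jᶜ : Finset (Fin n))),
          ((i : Fin m), (j : Fin n)) ∈ S → N i j = f i j)) := by
  classical
  simp only [Matrix.exists_nonneg_sum_eq_one_rank_eq_one_iff, vecMulVec_apply]
  constructor
  · rintro ⟨u, hu, v, hv, huv⟩
    refine ⟨univ.filter (u · = 0), univ.filter (v · = 0),
      filter_eq_zero_ne_univ_of_mem_stdSimplex hu, filter_eq_zero_ne_univ_of_mem_stdSimplex hv,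
      fun p hp hf => ?_, fun p hp hf => ?_,
      _, restrict_mem_stdSimplex hu ?_, _, restrict_mem_stdSimplex hv ?_,
      fun i j hij => huv _ hij⟩
    · simpa [← huv p hp] using hf
    · simpa [← huv p hp] using hf
    · simp
    · simp
  · rintro ⟨I, J, -, -, hzero, hnonzero, u, hu, v, hv, huv⟩
    refine ⟨_, extend_mem_stdSimplex hu, _, extend_mem_stdSimplex hv, fun p hp => ?_⟩
    by_cases hf : f p.1 p.2 = 0
    · rcases hzero p hp hf with hi | hj
      · rw [Function.extend_val_apply' (g := u) (notMem_compl.mpr hi), Pi.zero_apply, zero_mul, hf]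
      · rw [Function.extend_val_apply' (g := v) (notMem_compl.mpr hj), Pi.zero_apply, mul_zero, hf]
    · obtain ⟨hi, hj⟩ := hnonzero p hp hf
      rw [Function.extend_val_apply (mem_compl.mpr hi),
        Function.extend_val_apply (mem_compl.mpr hj)]
      exact huv _ _ hp

/-- A partial matrix with nonnegative specified entries is completable to a rank-one
matrix in the standard simplex iff there are proper sets of rows `I` and columns `J`
covering all zero entries, avoiding all nonzero specified entries, such that the
restriction to the remaining rows and columns is completable to a rank-one matrix in
the corresponding standard simplex. -/
theorem completable_with_zeros_iff (m n : ℕ) (S : Set (Fin m × Fin n))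
    (f : Fin m → Fin n → ℝ) (hf : ∀ p ∈ S, 0 ≤ f p.1 p.2) :
    (∃ M : Matrix (Fin m) (Fin n) ℝ,
      (∀ i j, 0 ≤ M i j) ∧ (∑ i, ∑ j, M i j = 1) ∧ M.rank = 1 ∧
      ∀ p ∈ S, M p.1 p.2 = f p.1 p.2) ↔
    (∃ I : Finset (Fin m), ∃ J : Finset (Fin n),
      I ≠ Finset.univ ∧ J ≠ Finset.univ ∧
      (∀ p ∈ S, f p.1 p.2 = 0 → p.1 ∈ I ∨ p.2 ∈ J) ∧
      (∀ p ∈ S, f p.1 p.2 ≠ 0 → p.1 ∉ I ∧ p.2 ∉ J) ∧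
      (∃ N : Matrix ↥(Iᶜ : Finset (Fin m)) ↥(Jᶜ : Finset (Fin n)) ℝ,
        (∀ i j, 0 ≤ N i j) ∧ (∑ i, ∑ j, N i j = 1) ∧ N.rank = 1 ∧
        ∀ (i : ↥(Iᶜ : Finset (Fin m))) (j : ↥(Jᶜ : Finset (Fin n))),
          ((i : Fin m), (j : Fin n)) ∈ S → N i j = f i j)) :=
  completable_with_zeros_iff_general m n S f
end
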